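/- With notation as above, if {w₁,…,w_n} is a basis of V₀^{(1,0)} then det(Π_0^1 − φ^{-1}conj(Π_1^0))^{-1} = (−1)^n · (w₁∧…∧w_n ∧ φconj(w₁)∧…∧φconj(w_n)) / (w₁∧…∧w_n ∧ conj(w₁)∧…∧conj(w_n)), computed in Λ^{2n}ℂ^{2n}. Equivalently det(Π_0^1 − φ^{-1}conj(Π_1^0))^{-1} = (−1)^n · det(φ restricted as map V₀^{(0,1)} → V₁^{(0,1)}, expressed via the isomorphism conj(Π_1^0): V₀^{(0,1)} → V₁^{(0,1)}). -/

import Mathlib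

open Matrix MeasureTheory

noncomputable section

/-- Standard complex structure on ℝ^{2n}: J₀ e_{2k} = e_{2k+1}, J₀ e_{2k+1} = -e_{2k}. -/
def J0 (n : ℕ) : Matrix (Fin (2*n)) (Fin (2*n)) ℝ :=
  Matrix.of fun i j =>
    if (i : ℕ) = (j : ℕ) + 1 ∧ (j : ℕ) % 2 = 0 then 1
    else if (j : ℕ) = (i : ℕ) + 1 ∧ (i : ℕ) % 2 = 0 then -1 else 0

/-- Standard symplectic form Ω(u,v) = ⟨J₀ u, v⟩. -/
def Omega (n : ℕ) (u v : Fin (2*n) → ℝ) : ℝ := (J0 n *ᵥ u) ⬝ᵥ v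

/-- A complex structure J compatible with Ω: J² = -Id, Ω is J-invariant,
and ⟨·,·⟩_J := Ω(·, J·) is positive definite. -/
def Compatible (n : ℕ) (J : Matrix (Fin (2*n)) (Fin (2*n)) ℝ) : Prop :=
  J * J = -1 ∧ (∀ u v, Omega n (J *ᵥ u) (J *ᵥ v) = Omega n u v) ∧
    ∀ v : Fin (2*n) → ℝ, v ≠ 0 → 0 < Omega n v (J *ᵥ v)

/-- Complexification of a real matrix. -/
def mc {m : ℕ} (M : Matrix (Fin m) (Fin m) ℝ) : Matrix (Fin m) (Fin m) ℂ :=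
  M.map (fun x => (x : ℂ))

/-- Complexification of a real vector. -/
def vc {m : ℕ} (v : Fin m → ℝ) : Fin m → ℂ := fun i => (v i : ℂ)

/-- Projection P^{(1,0)} = ½(Id - iK) onto the +i eigenspace of K. -/
def P10 {n : ℕ} (K : Matrix (Fin (2*n)) (Fin (2*n)) ℝ) : Matrix (Fin (2*n)) (Fin (2*n)) ℂ :=
  (1/2 : ℂ) • (1 - Complex.I • mc K)

/-- Projection P^{(0,1)} = ½(Id + iK) onto the -i eigenspace of K. -/
def P01 {n : ℕ} (K : Matrix (Fin (2*n)) (Fin (2*n)) ℝ) : Matrix (Fin (2*n)) (Fin (2*n)) ℂ :=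
  (1/2 : ℂ) • (1 + Complex.I • mc K)

/-- `Amat n K J = (½(Id + (-K)·J))⁻¹`; so `Amat n (J0 n) J` is A_t^0 and
`Amat n J (J0 n)` is A_0^t. -/
def Amat (n : ℕ) (K J : Matrix (Fin (2*n)) (Fin (2*n)) ℝ) : Matrix (Fin (2*n)) (Fin (2*n)) ℝ :=
  ((1/2 : ℝ) • (1 + (-K) * J))⁻¹

/-- Π_t^0 = A_t^0 · P₀^{(1,0)}, the projection onto V_t^{(1,0)} with kernel V₀^{(0,1)}. -/
def PiT0 (n : ℕ) (J : Matrix (Fin (2*n)) (Fin (2*n)) ℝ) : Matrix (Fin (2*n)) (Fin (2*n)) ℂ :=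
  mc (Amat n (J0 n) J) * P10 (J0 n)

/-- Π_0^t = A_0^t · P_t^{(1,0)}, the projection onto V₀^{(1,0)} with kernel V_t^{(0,1)}. -/
def Pi0T (n : ℕ) (J : Matrix (Fin (2*n)) (Fin (2*n)) ℝ) : Matrix (Fin (2*n)) (Fin (2*n)) ℂ :=
  mc (Amat n J (J0 n)) * P10 J

/-- Model Bergman kernel 𝒫_J(Z,Z') = exp(-(π/2)⟨(-J₀J)(Z-Z'),Z-Z'⟩ - πiΩ(Z,Z')). -/
def Pker (n : ℕ) (J : Matrix (Fin (2*n)) (Fin (2*n)) ℝ) (Z Z' : Fin (2*n) → ℝ) : ℂ :=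
  Complex.exp (-(Real.pi : ℂ)/2 * Complex.ofReal ((((-(J0 n)) * J) *ᵥ (Z - Z')) ⬝ᵥ (Z - Z'))
    - (Real.pi : ℂ) * Complex.I * Complex.ofReal (Omega n Z Z'))

/-- Closed formula for the composed kernel (𝒫_t𝒫_0)(Z,Z'). -/
def PtP0form (n : ℕ) (J : Matrix (Fin (2*n)) (Fin (2*n)) ℝ) (Z Z' : Fin (2*n) → ℝ) : ℂ :=
  Complex.ofReal (Real.sqrt (Amat n (J0 n) J).det) *
    Complex.exp (-(Real.pi : ℂ) *
      ((Pi0T n J *ᵥ (vc Z - vc Z')) ⬝ᵥ (vc Z - vc Z')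
        + Complex.I * Complex.ofReal (Omega n Z Z')))

/-!
On `V₀^{(1,0)}` the operator `Π_0^1 − φ⁻¹ conj(Π_1^0)` is the identity, while it sends `φ v̄` to
`−v̄` for `v̄ ∈ V₀^{(0,1)}`: indeed `φ v̄ ∈ V₁^{(0,1)}`, which `Π_0^1` kills and `conj(Π_1^0)`
fixes. So it maps the columns `w, φ w̄` to `w, −w̄`, and taking determinants gives the formula;
the columns `w, w̄` are independent, being eigenvectors of `J₀` for the eigenvalues `±i`.
Compatibility of `J₁` makes `½(1 − J₁J₀)` invertible: a real vector `v` it kills would satisfy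
`J₁v = −J₀v`, hence `Ω(v, J₁v) = −|J₀v|² ≤ 0`.
-/

open Complex

lemma LinearIndependent.sum_elim_of_eigen {K M ι ι' : Type*} [Field K] [AddCommGroup M]
    [Module K M] {u : ι → M} {v : ι' → M} (hu : LinearIndependent K u)
    (hv : LinearIndependent K v) (f : Module.End K M) {μ ν : K} (hμν : μ ≠ ν)
    (hfu : ∀ i, f (u i) = μ • u i) (hfv : ∀ i, f (v i) = ν • v i) :
    LinearIndependent K (Sum.elim u v) := by
  refine hu.sum_type hv ((f.eigenspaces_iSupIndep.pairwiseDisjoint hμν).mono ?_ ?_)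
  · exact Submodule.span_le.mpr <| Set.range_subset_iff.mpr fun i =>
      Module.End.mem_eigenspace_iff.mpr (hfu i)
  · exact Submodule.span_le.mpr <| Set.range_subset_iff.mpr fun i =>
      Module.End.mem_eigenspace_iff.mpr (hfv i)

lemma LinearIndependent.star {ι M : Type*} [AddCommGroup M] [Module ℂ M] [StarAddMonoid M]
    [StarModule ℂ M] {w : ι → M} (hw : LinearIndependent ℂ w) :
    LinearIndependent ℂ fun k => star (w k) :=
  hw.map_of_injective_injectiveₛ (starRingEnd ℂ) (starAddEquiv : M ≃+ M).toAddMonoidHom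
    star_injective star_injective fun r x => by simp [star_smul]

lemma isUnit_det_of_conj_mul_self_eq_neg_one {m : ℕ} {R : Type*} [CommRing R] [Nontrivial R]
    {A K : Matrix (Fin m) (Fin m) R} (h : A * K * A⁻¹ * (A * K * A⁻¹) = -1) :
    IsUnit A.det := by
  by_contra hA
  have hdet := congrArg Matrix.det h
  simp [Matrix.det_nonsing_inv, Ring.inverse_non_unit _ hA, Matrix.det_neg] at hdet
  exact ((isUnit_neg_one (α := R)).pow m).ne_zero hdet.symm

section Complexification

variable {m : ℕ}

lemma mc_mul (A B : Matrix (Fin m) (Fin m) ℝ) : mc (A * B) = mc A * mc B :=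
  Matrix.map_mul (f := ofRealHom)

lemma mc_one : mc (1 : Matrix (Fin m) (Fin m) ℝ) = 1 :=
  Matrix.map_one _ ofReal_zero ofReal_one

lemma map_conj_mc (A : Matrix (Fin m) (Fin m) ℝ) : (mc A).map (starRingEnd ℂ) = mc A := by
  ext i j; simp [mc]

lemma mc_half_one_sub_mul_mulVec (A B : Matrix (Fin m) (Fin m) ℝ) (x : Fin m → ℂ) :
    mc ((1/2 : ℝ) • (1 + (-A) * B)) *ᵥ x = (1/2 : ℂ) • (x - mc A *ᵥ (mc B *ᵥ x)) := by
  have h : mc ((1/2 : ℝ) • (1 + (-A) * B)) = (1/2 : ℂ) • (1 - mc A * mc B) := by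
    rw [← mc_mul]; ext i j
    by_cases h : i = j <;> simp [mc, h]; ring
  rw [h, Matrix.smul_mulVec, Matrix.sub_mulVec, Matrix.one_mulVec, Matrix.mulVec_mulVec]

lemma det_half_one_sub_mul_comm (A B : Matrix (Fin m) (Fin m) ℝ) :
    ((1/2 : ℝ) • (1 + (-A) * B)).det = ((1/2 : ℝ) • (1 + (-B) * A)).det := by
  rw [Matrix.det_smul, Matrix.det_smul, Matrix.det_one_add_mul_comm, Matrix.neg_mul,
    Matrix.mul_neg]

lemma mc_mulVec_star (A : Matrix (Fin m) (Fin m) ℝ) (x : Fin m → ℂ) :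
    mc A *ᵥ star x = star (mc A *ᵥ x) := by
  ext i; simp [mc, Matrix.mulVec, dotProduct]

lemma mc_mulVec_star_of_mulVec_eq_I {A : Matrix (Fin m) (Fin m) ℝ} {x : Fin m → ℂ}
    (hx : mc A *ᵥ x = I • x) : mc A *ᵥ star x = -I • star x := by
  rw [mc_mulVec_star, hx, star_smul, star_def, conj_I]

lemma linearIndependent_sum_elim_star {ι : Type*} {A : Matrix (Fin m) (Fin m) ℝ}
    {w : ι → Fin m → ℂ} (hw : ∀ k, mc A *ᵥ w k = I • w k) (hli : LinearIndependent ℂ w) :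
    LinearIndependent ℂ (Sum.elim w fun k => star (w k)) :=
  hli.sum_elim_of_eigen hli.star (mc A).mulVecLin (by norm_num [Complex.ext_iff]) hw
    fun k => mc_mulVec_star_of_mulVec_eq_I (hw k)

lemma mc_conj_mulVec_of_mulVec_eq {A K : Matrix (Fin m) (Fin m) ℝ} (hA : IsUnit A.det)
    {μ : ℂ} {y : Fin m → ℂ} (hy : mc K *ᵥ y = μ • y) :
    mc (A * K * A⁻¹) *ᵥ (mc A *ᵥ y) = μ • (mc A *ᵥ y) := by
  rw [Matrix.mulVec_mulVec, ← mc_mul, Matrix.mul_assoc, Matrix.nonsing_inv_mul _ hA,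
    Matrix.mul_one, mc_mul, ← Matrix.mulVec_mulVec, hy, Matrix.mulVec_smul]

end Complexification

lemma Fin.val_sub_lt_of_not_lt {n : ℕ} (j : Fin (2*n)) (h : ¬ (j : ℕ) < n) :
    (j : ℕ) - n < n := by
  omega

def blockCols {R ι : Type*} {n : ℕ} (u v : Fin n → ι → R) : Matrix ι (Fin (2*n)) R :=
  Matrix.of fun i j =>
    (if h : (j : ℕ) < n then u ⟨j, h⟩ else v ⟨(j : ℕ) - n, Fin.val_sub_lt_of_not_lt j h⟩) i

section BlockCols

variable {R : Type*} {n : ℕ}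

lemma mul_blockCols [NonUnitalNonAssocSemiring R] {ι : Type*} [Fintype ι]
    (M : Matrix ι ι R) (u v : Fin n → ι → R) :
    M * blockCols u v = blockCols (fun k => M *ᵥ u k) (fun k => M *ᵥ v k) := by
  ext i j
  by_cases hj : (j : ℕ) < n <;>
    simp [blockCols, hj, Matrix.mul_apply, Matrix.mulVec, dotProduct]

lemma prod_ite_lt_one_neg_one [CommRing R] :
    ∏ j : Fin (2*n), (if (j : ℕ) < n then (1 : R) else -1) = (-1) ^ n := by
  rw [Fin.prod_univ_eq_prod_range (fun j => if j < n then (1 : R) else -1), two_mul,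
    Finset.prod_range_add]
  simp [Finset.prod_ite_of_true]

lemma det_blockCols_neg_right [CommRing R] (u v : Fin n → Fin (2*n) → R) :
    (blockCols u (-v)).det = (-1) ^ n * (blockCols u v).det := by
  set d : Fin (2*n) → R := fun j => if (j : ℕ) < n then 1 else -1
  have h : blockCols u (-v) = Matrix.of fun i j => d j * blockCols u v i j := by
    ext i j
    by_cases hj : (j : ℕ) < n <;> simp [d, blockCols, hj]
  rw [h, Matrix.det_mul_row d, prod_ite_lt_one_neg_one]

lemma blockCols_col_comp_finSumFinEquiv {ι : Type*} (u v : Fin n → ι → R) :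
    (blockCols u v).col ∘ (finSumFinEquiv.trans (finCongr (two_mul n).symm)) =
      Sum.elim u v := by
  funext k
  rw [Function.comp_apply]
  rcases k with k | k <;> ext i <;> simp [blockCols]

lemma det_blockCols_ne_zero [Field R] {u v : Fin n → Fin (2*n) → R}
    (h : LinearIndependent R (Sum.elim u v)) : (blockCols u v).det ≠ 0 := by
  rw [← blockCols_col_comp_finSumFinEquiv, linearIndependent_equiv,
    Matrix.linearIndependent_cols_iff_isUnit, Matrix.isUnit_iff_isUnit_det] at h
  exact h.ne_zero

end BlockCols

section Projections

variable {n : ℕ} (K J : Matrix (Fin (2*n)) (Fin (2*n)) ℝ)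

lemma P10_mulVec_of_mulVec_eq_neg_I {y : Fin (2*n) → ℂ} (hy : mc J *ᵥ y = -I • y) :
    P10 J *ᵥ y = 0 := by
  rw [P10, Matrix.smul_mulVec, Matrix.sub_mulVec, Matrix.one_mulVec, Matrix.smul_mulVec, hy,
    smul_smul]
  simp

lemma P01_mulVec_of_mulVec_eq_I {x : Fin (2*n) → ℂ} (hx : mc K *ᵥ x = I • x) :
    P01 K *ᵥ x = 0 := by
  rw [P01, Matrix.smul_mulVec, Matrix.add_mulVec, Matrix.one_mulVec, Matrix.smul_mulVec, hx,
    smul_smul]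
  simp

lemma Amat_mul_P10_mulVec_of_mulVec_eq_I (hS : IsUnit ((1/2 : ℝ) • (1 + (-J) * K)).det)
    {x : Fin (2*n) → ℂ} (hx : mc K *ᵥ x = I • x) : (mc (Amat n J K) * P10 J) *ᵥ x = x := by
  have h : P10 J *ᵥ x = mc ((1/2 : ℝ) • (1 + (-J) * K)) *ᵥ x := by
    rw [mc_half_one_sub_mul_mulVec, hx, Matrix.mulVec_smul, P10, Matrix.smul_mulVec,
      Matrix.sub_mulVec, Matrix.one_mulVec, Matrix.smul_mulVec]
  rw [← Matrix.mulVec_mulVec, h, Matrix.mulVec_mulVec, Amat, ← mc_mul,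
    Matrix.nonsing_inv_mul _ hS, mc_one, Matrix.one_mulVec]

lemma Amat_mul_P01_mulVec_of_mulVec_eq_neg_I (hS : IsUnit ((1/2 : ℝ) • (1 + (-K) * J)).det)
    {y : Fin (2*n) → ℂ} (hy : mc J *ᵥ y = -I • y) : (mc (Amat n K J) * P01 K) *ᵥ y = y := by
  have h : P01 K *ᵥ y = mc ((1/2 : ℝ) • (1 + (-K) * J)) *ᵥ y := by
    rw [mc_half_one_sub_mul_mulVec, hy, Matrix.mulVec_smul, P01, Matrix.smul_mulVec,
      Matrix.add_mulVec, Matrix.one_mulVec, Matrix.smul_mulVec, neg_smul, sub_neg_eq_add]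
  rw [← Matrix.mulVec_mulVec, h, Matrix.mulVec_mulVec, Amat, ← mc_mul,
    Matrix.nonsing_inv_mul _ hS, mc_one, Matrix.one_mulVec]

lemma map_conj_P10 : (P10 K).map (starRingEnd ℂ) = P01 K := by
  ext i j
  by_cases h : i = j <;> simp [P10, P01, mc, h, Complex.ext_iff]

lemma map_conj_PiT0 : (PiT0 n J).map (starRingEnd ℂ) = mc (Amat n (J0 n) J) * P01 (J0 n) := by
  rw [PiT0, Matrix.map_mul, map_conj_mc, map_conj_P10]

end Projections

section Compatible

variable {n : ℕ} {J : Matrix (Fin (2*n)) (Fin (2*n)) ℝ}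

lemma Compatible.det_half_one_sub_mul_J0_ne_zero (hJ : Compatible n J) :
    ((1/2 : ℝ) • (1 + (-J) * J0 n)).det ≠ 0 := by
  intro hdet
  obtain ⟨v, hv, hSv⟩ := Matrix.exists_mulVec_eq_zero_iff.mpr hdet
  have hfix : (J * J0 n) *ᵥ v = v := by
    rw [Matrix.smul_mulVec, smul_eq_zero_iff_right (by norm_num), Matrix.add_mulVec,
      Matrix.one_mulVec, Matrix.neg_mul, Matrix.neg_mulVec, add_neg_eq_zero] at hSv
    exact hSv.symm
  have hJv : J *ᵥ v = -(J0 n *ᵥ v) := by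
    conv_lhs => rw [← hfix]
    rw [Matrix.mulVec_mulVec, ← Matrix.mul_assoc, hJ.1, Matrix.neg_mul, Matrix.one_mul,
      Matrix.neg_mulVec]
  have hpos := hJ.2.2 v hv
  rw [Omega, hJv, dotProduct_neg, neg_pos] at hpos
  exact (Fintype.sum_nonneg fun i => mul_self_nonneg ((J0 n *ᵥ v) i)).not_gt hpos

lemma Compatible.Pi0T_sub_mul_conj_PiT0_mulVec_of_mulVec_J0_eq_I (hJ : Compatible n J)
    (ψ : Matrix (Fin (2*n)) (Fin (2*n)) ℝ) {x : Fin (2*n) → ℂ} (hx : mc (J0 n) *ᵥ x = I • x) :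
    (Pi0T n J - mc ψ * (PiT0 n J).map (starRingEnd ℂ)) *ᵥ x = x := by
  have hS := isUnit_iff_ne_zero.mpr hJ.det_half_one_sub_mul_J0_ne_zero
  rw [Matrix.sub_mulVec, Pi0T, Amat_mul_P10_mulVec_of_mulVec_eq_I _ _ hS hx,
    ← Matrix.mulVec_mulVec, map_conj_PiT0, ← Matrix.mulVec_mulVec,
    P01_mulVec_of_mulVec_eq_I _ hx, Matrix.mulVec_zero, Matrix.mulVec_zero, sub_zero]

lemma Compatible.Pi0T_sub_mul_conj_PiT0_mulVec_of_mulVec_eq_neg_I (hJ : Compatible n J)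
    (ψ : Matrix (Fin (2*n)) (Fin (2*n)) ℝ) {y : Fin (2*n) → ℂ} (hy : mc J *ᵥ y = -I • y) :
    (Pi0T n J - mc ψ * (PiT0 n J).map (starRingEnd ℂ)) *ᵥ y = -(mc ψ *ᵥ y) := by
  have hS := isUnit_iff_ne_zero.mpr hJ.det_half_one_sub_mul_J0_ne_zero
  rw [det_half_one_sub_mul_comm] at hS
  rw [Matrix.sub_mulVec, Pi0T, ← Matrix.mulVec_mulVec, P10_mulVec_of_mulVec_eq_neg_I _ hy,
    Matrix.mulVec_zero, ← Matrix.mulVec_mulVec, map_conj_PiT0,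
    Amat_mul_P01_mulVec_of_mulVec_eq_neg_I _ _ hS hy, zero_sub]

end Compatible

/-- for a basis {w₁,…,w_n} of V₀^{(1,0)},
det(Π_0^1 - φ⁻¹conj(Π_1^0))⁻¹ = (-1)ⁿ · (w₁∧…∧w_n∧φw̄₁∧…∧φw̄_n)/(w₁∧…∧w_n∧w̄₁∧…∧w̄_n),
the ratio of top wedge products being expressed as a ratio of determinants of the
matrices whose columns are the listed vectors. -/
theorem stmt14 (n : ℕ) (φ : Matrix (Fin (2*n)) (Fin (2*n)) ℝ)
    (hJ1 : Compatible n (φ * J0 n * φ⁻¹))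
    (w : Fin n → (Fin (2*n) → ℂ))
    (hw : ∀ k, mc (J0 n) *ᵥ w k = Complex.I • w k)
    (hli : LinearIndependent ℂ w) :
    (Matrix.of fun (i j : Fin (2*n)) =>
        (if h : (j : ℕ) < n then w ⟨j, h⟩
          else fun k => (starRingEnd ℂ) (w ⟨(j : ℕ) - n, by have := j.isLt; omega⟩ k)) i).det
      ≠ 0 ∧
    ((Pi0T n (φ * J0 n * φ⁻¹)
        - mc φ⁻¹ * (PiT0 n (φ * J0 n * φ⁻¹)).map (⇑(starRingEnd ℂ))).det)⁻¹
      = (-1 : ℂ)^n *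
        (Matrix.of fun (i j : Fin (2*n)) =>
          (if h : (j : ℕ) < n then w ⟨j, h⟩
            else mc φ *ᵥ fun k =>
              (starRingEnd ℂ) (w ⟨(j : ℕ) - n, by have := j.isLt; omega⟩ k)) i).det
        / (Matrix.of fun (i j : Fin (2*n)) =>
          (if h : (j : ℕ) < n then w ⟨j, h⟩
            else fun k => (starRingEnd ℂ) (w ⟨(j : ℕ) - n, by have := j.isLt; omega⟩ k)) i).det := by
  set M := Pi0T n (φ * J0 n * φ⁻¹) - mc φ⁻¹ * (PiT0 n (φ * J0 n * φ⁻¹)).map (starRingEnd ℂ)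
  set w' : Fin n → Fin (2*n) → ℂ := fun k => star (w k)
  set B := blockCols w w'
  set C := blockCols w fun k => mc φ *ᵥ w' k
  change B.det ≠ 0 ∧ M.det⁻¹ = (-1) ^ n * C.det / B.det
  have hφ : IsUnit φ.det := isUnit_det_of_conj_mul_self_eq_neg_one hJ1.1
  have hB : B.det ≠ 0 := det_blockCols_ne_zero (linearIndependent_sum_elim_star hw hli)
  have hMC : M * C = blockCols w (-w') := by
    rw [mul_blockCols]
    congr 1 <;> funext k
    · exact hJ1.Pi0T_sub_mul_conj_PiT0_mulVec_of_mulVec_J0_eq_I _ (hw k)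
    · rw [hJ1.Pi0T_sub_mul_conj_PiT0_mulVec_of_mulVec_eq_neg_I _
        (mc_conj_mulVec_of_mulVec_eq hφ (mc_mulVec_star_of_mulVec_eq_I (hw k))),
        Matrix.mulVec_mulVec, ← mc_mul, Matrix.nonsing_inv_mul _ hφ, mc_one, Matrix.one_mulVec]
      rfl
  have hdet : M.det * C.det = (-1) ^ n * B.det := by
    rw [← Matrix.det_mul, hMC, det_blockCols_neg_right]
  have hM : M.det ≠ 0 := fun h => by simp [h, hB] at hdet
  have hsq : ((-1 : ℂ) ^ n) ^ 2 = 1 := by rw [← pow_mul, pow_mul', neg_one_sq, one_pow]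
  refine ⟨hB, ?_⟩
  field_simp
  linear_combination (-(-1 : ℂ) ^ n) * hdet - B.det * hsq

end
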